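/- arXiv:1203.6812 — 6 statements merged into one kernel-verified Lean document; each statement's English description precedes it below -/
import Mathlib

section
/- Let n ≥ 3, let U ⊆ ℝⁿ be an open convex set, let ℓ > 0, and for 1 ≤ i, j ≤ n let g_{ij} : ℝ → ℝ be continuously differentiable functions with g_{ij} = g_{ji}, such that for all x ∈ U: g'_{ij}(x_i + x_j) ≥ ℓ for all i ≠ j, and g'_{ii}(2x_i) ≥ 0 for all i. Define F : U → ℝⁿ by F_i(x) = Σ_{j=1}^n g_{ij}(x_i + x_j). Then for all x, y ∈ U, |x − y|_∞ ≤ (3n−4)/(2ℓ(n−1)(n−2)) · |F(x) − F(y)|_∞; in particular F is injective on U. -/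
/-!
Write `u = x - y` and `v = F x - F y`. By the mean value theorem along the segment `[y, x] ⊆ U`,
`v i = ∑ j, D i j` with a symmetric increment matrix `D i j = A i j * (u i + u j)`, where
`A i j ≥ ℓ` off the diagonal and `A i i ≥ 0`. Let `|u p| = ‖u‖`, say `u p ≥ 0`. Row `p` gives
`ℓ ((n - 2) u p + ∑ u) ≤ ‖v‖`, and pairing with `u` gives
`ℓ ((n - 2) ∑ u² + (∑ u)²) ≤ ∑ u i v i ≤ (∑ |u|) ‖v‖`. The row bound suffices unless `∑ u` is very
negative; in that case Cauchy–Schwarz on the coordinates other than `p` turns the second bound into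
the claim.
-/

open Finset

lemma exists_le_slope_of_le_deriv {f : ℝ → ℝ} (hf : Differentiable ℝ f) {a b c : ℝ}
    (hc : ∀ s ∈ Set.uIcc a b, c ≤ deriv f s) : ∃ m, c ≤ m ∧ f b - f a = m * (b - a) := by
  wlog hab : a ≤ b generalizing a b
  · obtain ⟨m, hcm, hm⟩ := this (Set.uIcc_comm a b ▸ hc) (le_of_not_ge hab)
    exact ⟨m, hcm, by linarith⟩
  rcases hab.eq_or_lt with rfl | hab
  · exact ⟨c, le_rfl, by simp⟩
  obtain ⟨ξ, hξ, hslope⟩ :=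
    exists_deriv_eq_slope f hab hf.continuous.continuousOn hf.differentiableOn
  refine ⟨deriv f ξ, hc ξ (Set.Icc_subset_uIcc (Set.Ioo_subset_Icc_self hξ)), ?_⟩
  rw [hslope, div_mul_cancel₀ _ (sub_ne_zero.mpr hab.ne')]

lemma exists_mem_segment_add_eq {ι : Type*} {x y : ι → ℝ} {s : ℝ} (i j : ι)
    (hs : s ∈ Set.uIcc (y i + y j) (x i + x j)) : ∃ z ∈ segment ℝ y x, z i + z j = s := by
  let π : (ι → ℝ) →ₗ[ℝ] ℝ :=
    LinearMap.proj (R := ℝ) (φ := fun _ => ℝ) i + LinearMap.proj (R := ℝ) (φ := fun _ => ℝ) j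
  have hs' : s ∈ π.toAffineMap '' segment ℝ y x := by rwa [image_segment, segment_eq_uIcc]
  exact hs'

lemma Convex.exists_le_slope_of_le_deriv {ι : Type*} {U : Set (ι → ℝ)} (hU : Convex ℝ U)
    {x y : ι → ℝ} (hx : x ∈ U) (hy : y ∈ U) {f : ℝ → ℝ} (hf : Differentiable ℝ f) {c : ℝ}
    (i j : ι) (hc : ∀ z ∈ U, c ≤ deriv f (z i + z j)) :
    ∃ m, c ≤ m ∧ f (x i + x j) - f (y i + y j) = m * ((x - y) i + (x - y) j) := by
  obtain ⟨m, hcm, hm⟩ := _root_.exists_le_slope_of_le_deriv hf (c := c) fun s hs => by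
    obtain ⟨z, hz, rfl⟩ := exists_mem_segment_add_eq i j hs
    exact hc z (hU.segment_subset hy hx hz)
  refine ⟨m, hcm, ?_⟩
  rw [hm, Pi.sub_apply, Pi.sub_apply]
  ring

lemma moment_inequality {ν t S L Q : ℝ} (hν : 3 ≤ ν) (ht : 0 ≤ t)
    (hCS : (L - t) ^ 2 ≤ (ν - 1) * (Q - t ^ 2)) (hLS : 2 * t ≤ L + S)
    (hS : (ν - 2) ^ 2 * t ≤ (3 * ν - 4) * -S) :
    2 * (ν - 1) * (ν - 2) * (t * L) ≤ (3 * ν - 4) * ((ν - 2) * Q + S ^ 2) := by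
  set E := (3 * ν - 4) * -S - (ν - 2) ^ 2 * t
  have hE : 0 ≤ E := sub_nonneg.mpr hS
  have hCS' := sub_nonneg.mpr hCS
  have hν₂ : 0 ≤ ν - 2 := by linarith
  have hν₃ : 0 ≤ 2 * ν - 3 := by linarith
  have hν₄ : 0 ≤ 3 * ν - 4 := by linarith
  have hG : 0 ≤ (L - t) - (t - S) := by linarith
  have hB : 0 ≤ (3 * ν - 4) * ((L - t) + t - S) - 2 * (ν - 1) ^ 2 * t := by nlinarith
  have hpos : 0 < (ν - 1) * (3 * ν - 4) := by nlinarith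
  refine le_of_mul_le_mul_left ?_ hpos
  have h₁ : 0 ≤ (3 * ν - 4) ^ 2 * (ν - 2) * ((ν - 1) * (Q - t ^ 2) - (L - t) ^ 2) := by
    positivity
  have h₂ : 0 ≤ (3 * ν - 4) * (ν - 2) * ((L - t) - (t - S)) *
      ((3 * ν - 4) * ((L - t) + t - S) - 2 * (ν - 1) ^ 2 * t) := by positivity
  have h₃ : 0 ≤ (2 * ν - 3) * E ^ 2 := by positivity
  have h₄ : 0 ≤ 2 * (ν - 1) ^ 2 * (ν - 2) * (t * E) := by positivity
  linear_combination h₁ + h₂ + h₃ + h₄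

lemma mul_le_of_moment_bounds {ν t S L Q M ℓ : ℝ} (hν : 3 ≤ ν) (ht : 0 ≤ t) (hℓ : 0 < ℓ)
    (hM : 0 ≤ M) (hCS : (L - t) ^ 2 ≤ (ν - 1) * (Q - t ^ 2)) (hLS : 2 * t ≤ L + S)
    (htL : t ≤ L) (hrow : ℓ * ((ν - 2) * t + S) ≤ M)
    (hquad : ℓ * ((ν - 2) * Q + S ^ 2) ≤ L * M) :
    2 * ℓ * (ν - 1) * (ν - 2) * t ≤ (3 * ν - 4) * M := by
  have hν₄ : 0 ≤ 3 * ν - 4 := by linarith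
  rcases le_or_gt ((ν - 2) ^ 2 * t) ((3 * ν - 4) * -S) with hS | hS
  · rcases ht.eq_or_lt with rfl | ht
    · simpa using mul_nonneg hν₄ hM
    have hkey := mul_le_mul_of_nonneg_left (moment_inequality hν ht.le hCS hLS hS) hℓ.le
    have hquad' := mul_le_mul_of_nonneg_left hquad hν₄
    refine le_of_mul_le_mul_right ?_ (ht.trans_le htL)
    linear_combination hkey + hquad'
  · have hrow' := mul_le_mul_of_nonneg_left hrow hν₄
    have hS' := mul_le_mul_of_nonneg_left hS.le hℓ.le
    linear_combination hrow' + hS'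

section IncrementMatrix

variable {ι : Type*} [Fintype ι] {ℓ : ℝ} {D A : ι → ι → ℝ} {u : ι → ℝ}

lemma sq_sum_abs_sub_le (u : ι → ℝ) (p : ι) :
    (∑ j, |u j| - |u p|) ^ 2 ≤ (Fintype.card ι - 1) * (∑ j, u j ^ 2 - u p ^ 2) := by
  classical
  have h := sq_sum_le_card_mul_sum_sq (s := univ.erase p) (f := fun j => |u j|)
  simp only [sq_abs, sum_erase_eq_sub (mem_univ p), card_erase_of_mem (mem_univ p),
    card_univ] at h
  rwa [Nat.cast_pred (Fintype.card_pos_iff.mpr ⟨p⟩)] at h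

lemma sum_sum_add_sq (u : ι → ℝ) :
    ∑ i, ∑ j, (u i + u j) ^ 2 = 2 * Fintype.card ι * ∑ j, u j ^ 2 + 2 * (∑ j, u j) ^ 2 := by
  simp only [add_sq, sum_add_distrib, sum_const, card_univ, nsmul_eq_mul, mul_assoc,
    ← mul_sum, ← sum_mul]
  ring

lemma two_mul_sum_mul_sum_row (hD_symm : ∀ i j, D i j = D j i) (u : ι → ℝ) :
    2 * ∑ i, u i * ∑ j, D i j = ∑ i, ∑ j, (u i + u j) * D i j := by
  have hswap : ∑ i, ∑ j, u i * D i j = ∑ i, ∑ j, u j * D i j := by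
    rw [sum_comm]; simp only [hD_symm]
  simp only [mul_sum, add_mul, sum_add_distrib, ← hswap, two_mul]

variable (hDA : ∀ i j, D i j = A i j * (u i + u j)) (hA_off : ∀ i j, i ≠ j → ℓ ≤ A i j)
  (hA_diag : ∀ i, 0 ≤ A i i)
include hDA hA_off hA_diag

lemma le_sum_row_of_abs_le {p : ι} (hp : ∀ j, |u j| ≤ u p) :
    ℓ * ((Fintype.card ι - 2) * u p + ∑ j, u j) ≤ ∑ j, D p j := by
  classical
  have hterm : ∀ j ∈ univ.erase p, ℓ * (u p + u j) ≤ D p j := fun j hj => by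
    rw [hDA]
    exact mul_le_mul_of_nonneg_right (hA_off p j (ne_of_mem_erase hj).symm)
      (by linarith [neg_abs_le (u j), hp j])
  have hdiag : 0 ≤ D p p := by
    rw [hDA]
    exact mul_nonneg (hA_diag p) (by linarith [abs_nonneg (u p), hp p])
  calc ℓ * ((Fintype.card ι - 2) * u p + ∑ j, u j)
      = ∑ j ∈ univ.erase p, ℓ * (u p + u j) := by
        rw [← mul_sum, sum_add_distrib, sum_const, sum_erase_eq_sub (mem_univ p),
          card_erase_of_mem (mem_univ p), card_univ, nsmul_eq_mul,
          Nat.cast_pred (Fintype.card_pos_iff.mpr ⟨p⟩)]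
        ring
    _ ≤ ∑ j ∈ univ.erase p, D p j := sum_le_sum hterm
    _ ≤ ∑ j, D p j := by rw [← add_sum_erase _ _ (mem_univ p)]; linarith

lemma le_sum_mul_sum_row (hD_symm : ∀ i j, D i j = D j i) :
    ℓ * ((Fintype.card ι - 2) * ∑ j, u j ^ 2 + (∑ j, u j) ^ 2) ≤ ∑ i, u i * ∑ j, D i j := by
  classical
  have hterm : ∀ i j, ℓ * (u i + u j) ^ 2 - (if i = j then ℓ * (u i + u j) ^ 2 else 0)
      ≤ (u i + u j) * D i j := by
    intro i j
    rw [hDA, ← mul_assoc, mul_comm (u i + u j), mul_assoc, ← sq]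
    split_ifs with h
    · simpa using mul_nonneg (h ▸ hA_diag i) (sq_nonneg (u i + u j))
    · simpa using mul_le_mul_of_nonneg_right (hA_off i j h) (sq_nonneg (u i + u j))
  have h := sum_le_sum (s := univ) fun i _ => sum_le_sum (s := univ) fun j _ => hterm i j
  simp only [sum_sub_distrib, sum_ite_eq, mem_univ, if_true, ← mul_sum, sum_sum_add_sq,
    ← two_mul_sum_mul_sum_row hD_symm] at h
  have h4 : ∑ i, (u i + u i) ^ 2 = 4 * ∑ i, u i ^ 2 := by
    rw [mul_sum]; exact sum_congr rfl fun i _ => by ring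
  rw [h4] at h
  linarith

lemma mul_abs_le_of_abs_sum_row_le (hcard : 3 ≤ Fintype.card ι) (hℓ : 0 < ℓ)
    (hD_symm : ∀ i j, D i j = D j i) {M : ℝ}
    (hM : ∀ i, |∑ j, D i j| ≤ M) {p : ι} (hp : ∀ j, |u j| ≤ |u p|) :
    2 * ℓ * (Fintype.card ι - 1) * (Fintype.card ι - 2) * |u p| ≤
      (3 * Fintype.card ι - 4) * M := by
  wlog hup : 0 ≤ u p generalizing u D
  · refine abs_neg (u p) ▸ this (u := -u) (D := fun i j => -D i j)
      (fun i j => by simp [hDA]; ring) (by simp [hD_symm]) (by simpa using hM)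
      (by simpa using hp) ?_
    simp only [Pi.neg_apply]
    linarith
  rw [abs_of_nonneg hup] at hp ⊢
  have hrow := le_sum_row_of_abs_le hDA hA_off hA_diag hp
  have hquad := le_sum_mul_sum_row hDA hA_off hA_diag hD_symm
  have hpair : ∑ i, u i * ∑ j, D i j ≤ (∑ i, |u i|) * M := by
    rw [sum_mul]
    refine sum_le_sum fun i _ => ?_
    calc u i * ∑ j, D i j ≤ |u i| * |∑ j, D i j| := by rw [← abs_mul]; exact le_abs_self _
      _ ≤ |u i| * M := mul_le_mul_of_nonneg_left (hM i) (abs_nonneg _)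
  have hCS := sq_sum_abs_sub_le u p
  rw [abs_of_nonneg hup] at hCS
  have hLS : |u p| + u p ≤ ∑ j, (|u j| + u j) :=
    single_le_sum (f := fun j => |u j| + u j) (fun j _ => by linarith [neg_abs_le (u j)])
      (mem_univ p)
  have htL : |u p| ≤ ∑ j, |u j| :=
    single_le_sum (f := fun j => |u j|) (fun j _ => abs_nonneg _) (mem_univ p)
  rw [sum_add_distrib, abs_of_nonneg hup] at hLS
  rw [abs_of_nonneg hup] at htL
  exact mul_le_of_moment_bounds (by exact_mod_cast hcard) hup hℓ ((abs_nonneg _).trans (hM p))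
    hCS (by linarith) htL (hrow.trans ((le_abs_self _).trans (hM p))) (hquad.trans hpair)

lemma norm_le_of_abs_sum_row_le (hcard : 3 ≤ Fintype.card ι) (hℓ : 0 < ℓ)
    (hD_symm : ∀ i j, D i j = D j i) {M : ℝ} (hM : ∀ i, |∑ j, D i j| ≤ M) :
    ‖u‖ ≤ (3 * (Fintype.card ι : ℝ) - 4) /
      (2 * ℓ * ((Fintype.card ι : ℝ) - 1) * ((Fintype.card ι : ℝ) - 2)) * M := by
  have hn : (3 : ℝ) ≤ Fintype.card ι := by exact_mod_cast hcard
  obtain ⟨p, -, hp⟩ := exists_max_image univ (fun i => |u i|)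
    (univ_nonempty_iff.mpr (Fintype.card_pos_iff.mp (by omega)))
  have hpos : 0 < 2 * ℓ * ((Fintype.card ι : ℝ) - 1) * ((Fintype.card ι : ℝ) - 2) := by
    have : (0 : ℝ) < Fintype.card ι - 1 := by linarith
    have : (0 : ℝ) < Fintype.card ι - 2 := by linarith
    positivity
  have hbound := mul_abs_le_of_abs_sum_row_le hDA hA_off hA_diag hcard hℓ hD_symm hM
    (fun j => hp j (mem_univ j))
  have hM₀ : 0 ≤ M := (abs_nonneg _).trans (hM p)
  refine (pi_norm_le_iff_of_nonneg
    (mul_nonneg (div_nonneg (by linarith) hpos.le) hM₀)).mpr fun i => ?_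
  rw [Real.norm_eq_abs, div_mul_eq_mul_div, le_div_iff₀ hpos, mul_comm]
  exact (mul_le_mul_of_nonneg_left (hp i (mem_univ i)) hpos.le).trans hbound

end IncrementMatrix

lemma norm_sub_le_of_le_deriv {ι : Type*} [Fintype ι] (hcard : 3 ≤ Fintype.card ι)
    {U : Set (ι → ℝ)} (hU : Convex ℝ U) {ℓ : ℝ} (hℓ : 0 < ℓ) {g : ι → ι → ℝ → ℝ}
    (hg : ∀ i j, Differentiable ℝ (g i j)) (hg_symm : ∀ i j, g i j = g j i)
    (hder : ∀ x ∈ U, ∀ i j, i ≠ j → ℓ ≤ deriv (g i j) (x i + x j))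
    (hder_diag : ∀ x ∈ U, ∀ i, 0 ≤ deriv (g i i) (2 * x i)) {x y : ι → ℝ} (hx : x ∈ U)
    (hy : y ∈ U) :
    ‖x - y‖ ≤ (3 * (Fintype.card ι : ℝ) - 4) /
      (2 * ℓ * ((Fintype.card ι : ℝ) - 1) * ((Fintype.card ι : ℝ) - 2)) *
        ‖(fun i => ∑ j, g i j (x i + x j)) - (fun i => ∑ j, g i j (y i + y j))‖ := by
  classical
  have hderiv : ∀ i j, ∀ z ∈ U, (if i = j then 0 else ℓ) ≤ deriv (g i j) (z i + z j) := by
    intro i j z hz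
    split_ifs with h
    · subst h; rw [← two_mul]; exact hder_diag z hz i
    · exact hder z hz i j h
  choose A hA_ge hA using fun i j => hU.exists_le_slope_of_le_deriv hx hy (hg i j) i j (hderiv i j)
  refine norm_le_of_abs_sum_row_le hA (fun i j h => by simpa [h] using hA_ge i j)
    (fun i => by simpa using hA_ge i i) hcard hℓ (fun i j => by simp only [hg_symm i j, add_comm])
    fun i => ?_
  simpa [Finset.sum_sub_distrib] using norm_le_pi_norm
    ((fun i => ∑ j, g i j (x i + x j)) - (fun i => ∑ j, g i j (y i + y j))) i

theorem inverse_function_lipschitz_general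
    (n : ℕ) (hn : 3 ≤ n) (U : Set (Fin n → ℝ))
    (hUconv : Convex ℝ U) (ℓ : ℝ) (hℓ : 0 < ℓ)
    (g : Fin n → Fin n → ℝ → ℝ)
    (hg1 : ∀ i j, ContDiff ℝ 1 (g i j))
    (hgsym : ∀ i j, g i j = g j i)
    (hder : ∀ x ∈ U, ∀ i j, i ≠ j → ℓ ≤ deriv (g i j) (x i + x j))
    (hder2 : ∀ x ∈ U, ∀ i, 0 ≤ deriv (g i i) (2 * x i)) :
    (∀ x ∈ U, ∀ y ∈ U,
      ‖x - y‖ ≤ (3 * (n : ℝ) - 4) / (2 * ℓ * ((n : ℝ) - 1) * ((n : ℝ) - 2)) *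
        ‖(fun i => ∑ j, g i j (x i + x j)) - (fun i => ∑ j, g i j (y i + y j))‖) ∧
    Set.InjOn (fun x (i : Fin n) => ∑ j, g i j (x i + x j)) U := by
  have hbound := fun x (hx : x ∈ U) y (hy : y ∈ U) =>
    Fintype.card_fin n ▸ norm_sub_le_of_le_deriv (by simpa using hn) hUconv hℓ
      (fun i j => (hg1 i j).differentiable one_ne_zero) hgsym hder hder2 hx hy
  refine ⟨hbound, fun x hx y hy hxy => ?_⟩
  have h := hbound x hx y hy
  rwa [sub_eq_zero.mpr hxy, norm_zero, mul_zero, norm_le_zero_iff, sub_eq_zero] at h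

theorem inverse_function_lipschitz
    (n : ℕ) (hn : 3 ≤ n) (U : Set (Fin n → ℝ)) (hUopen : IsOpen U)
    (hUconv : Convex ℝ U) (ℓ : ℝ) (hℓ : 0 < ℓ)
    (g : Fin n → Fin n → ℝ → ℝ)
    (hg1 : ∀ i j, ContDiff ℝ 1 (g i j))
    (hgsym : ∀ i j, g i j = g j i)
    (hder : ∀ x ∈ U, ∀ i j, i ≠ j → ℓ ≤ deriv (g i j) (x i + x j))
    (hder2 : ∀ x ∈ U, ∀ i, 0 ≤ deriv (g i i) (2 * x i)) :
    (∀ x ∈ U, ∀ y ∈ U,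
      ‖x - y‖ ≤ (3 * (n : ℝ) - 4) / (2 * ℓ * ((n : ℝ) - 1) * ((n : ℝ) - 2)) *
        ‖(fun i => ∑ j, g i j (x i + x j)) - (fun i => ∑ j, g i j (y i + y j))‖) ∧
    Set.InjOn (fun x (i : Fin n) => ∑ j, g i j (x i + x j)) U :=
  inverse_function_lipschitz_general n hn U hUconv ℓ hℓ g hg1 hgsym hder hder2
end

section
/- Let n ≥ 3 and ℓ > 0, and let J be an n×n real symmetric diagonally dominant matrix all of whose entries satisfy J_{ij} ≥ ℓ. Then J is invertible and ‖J⁻¹‖∞ ≤ √n / ((n−2)ℓ). -/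
open Matrix


theorem quadLB (n : ℕ) (hn : 3 ≤ n) (ℓ : ℝ) (hℓ : 0 < ℓ)
    (J : Matrix (Fin n) (Fin n) ℝ) (hsym : J.IsSymm)
    (hdd : ∀ i, ∑ j ∈ Finset.univ.erase i, |J i j| ≤ |J i i|)
    (hent : ∀ i j, ℓ ≤ J i j) (x : Fin n → ℝ) :
    ((n:ℝ) - 2) * ℓ * ∑ i, x i ^ 2 ≤ ∑ i, ∑ j, J i j * x i * x j := by
  have hJs : ∀ i j, J i j = J j i := fun i j => hsym.apply j i
  have ha0 : ∀ i j, (0:ℝ) ≤ J i j - ℓ := fun i j => by linarith [hent i j]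
  -- decomposition
  have h1 : ∑ i, ∑ j, J i j * x i * x j
      = (∑ i, ∑ j, (J i j - ℓ) * x i * x j) + ℓ * ((∑ i, x i) * (∑ i, x i)) := by
    rw [Finset.sum_mul_sum, Finset.mul_sum, ← Finset.sum_add_distrib]
    refine Finset.sum_congr rfl fun i _ => ?_
    rw [Finset.mul_sum, ← Finset.sum_add_distrib]
    exact Finset.sum_congr rfl fun j _ => by ring
  have h2 : 0 ≤ ℓ * ((∑ i, x i) * (∑ i, x i)) :=
    mul_nonneg hℓ.le (mul_self_nonneg _)
  -- T identity
  have hT : ∑ i, ∑ j, (J i j - ℓ) * (x i ^ 2 + x j ^ 2) / 2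
      = ∑ i, (∑ j, (J i j - ℓ)) * x i ^ 2 := by
    have e1 : ∑ i, ∑ j, (J i j - ℓ) * x j ^ 2 = ∑ i, ∑ j, (J i j - ℓ) * x i ^ 2 := by
      rw [Finset.sum_comm]
      exact Finset.sum_congr rfl fun i _ => Finset.sum_congr rfl fun j _ => by
        rw [hJs i j]
    calc ∑ i, ∑ j, (J i j - ℓ) * (x i ^ 2 + x j ^ 2) / 2
        = ((∑ i, ∑ j, (J i j - ℓ) * x i ^ 2) + ∑ i, ∑ j, (J i j - ℓ) * x j ^ 2) / 2 := by
          rw [← Finset.sum_add_distrib, Finset.sum_div]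
          refine Finset.sum_congr rfl fun i _ => ?_
          rw [← Finset.sum_add_distrib, Finset.sum_div]
          exact Finset.sum_congr rfl fun j _ => by ring
      _ = ∑ i, ∑ j, (J i j - ℓ) * x i ^ 2 := by rw [e1]; ring
      _ = ∑ i, (∑ j, (J i j - ℓ)) * x i ^ 2 :=
          Finset.sum_congr rfl fun i _ => (Finset.sum_mul _ _ _).symm
  -- termwise lower bound
  have h3 : ∑ i, ∑ j, (-((J i j - ℓ) * (x i ^ 2 + x j ^ 2) / 2)
        + (if i = j then 2 * (J i i - ℓ) * x i ^ 2 else 0))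
      ≤ ∑ i, ∑ j, (J i j - ℓ) * x i * x j := by
    refine Finset.sum_le_sum fun i _ => Finset.sum_le_sum fun j _ => ?_
    by_cases hij : i = j
    · subst hij; rw [if_pos rfl]
      nlinarith [ha0 i i, sq_nonneg (x i)]
    · simp only [if_neg hij, add_zero]
      nlinarith [mul_nonneg (ha0 i j) (sq_nonneg (x i + x j))]
  have h4 : ∑ i, ∑ j, (-((J i j - ℓ) * (x i ^ 2 + x j ^ 2) / 2)
        + (if i = j then 2 * (J i i - ℓ) * x i ^ 2 else 0))
      = ∑ i, (2 * (J i i - ℓ) - ∑ j, (J i j - ℓ)) * x i ^ 2 := by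
    have step : ∀ i : Fin n, ∑ j, (-((J i j - ℓ) * (x i ^ 2 + x j ^ 2) / 2)
        + (if i = j then 2 * (J i i - ℓ) * x i ^ 2 else 0))
        = -(∑ j, (J i j - ℓ) * (x i ^ 2 + x j ^ 2) / 2) + 2 * (J i i - ℓ) * x i ^ 2 := by
      intro i
      rw [Finset.sum_add_distrib, Finset.sum_neg_distrib, Finset.sum_ite_eq]
      simp
    rw [Finset.sum_congr rfl fun i _ => step i, Finset.sum_add_distrib,
      Finset.sum_neg_distrib, hT]
    have expand : ∑ i, (2 * (J i i - ℓ) - ∑ j, (J i j - ℓ)) * x i ^ 2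
        = ∑ i, (2 * (J i i - ℓ) * x i ^ 2 - (∑ j, (J i j - ℓ)) * x i ^ 2) :=
      Finset.sum_congr rfl fun i _ => by ring
    rw [expand, Finset.sum_sub_distrib]
    ring
  -- coefficient bound
  have h5 : ∀ i, ((n:ℝ) - 2) * ℓ ≤ 2 * (J i i - ℓ) - ∑ j, (J i j - ℓ) := by
    intro i
    have habs : ∀ j, |J i j| = J i j := fun j => abs_of_pos (lt_of_lt_of_le hℓ (hent i j))
    have hdd' := hdd i
    simp only [habs] at hdd'
    have hsplit : ∑ j ∈ Finset.univ.erase i, J i j + J i i = ∑ j, J i j :=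
      Finset.sum_erase_add _ _ (Finset.mem_univ i)
    have hsa : ∑ j, (J i j - ℓ) = (∑ j, J i j) - n * ℓ := by
      rw [Finset.sum_sub_distrib]
      simp [Finset.card_univ, mul_comm]
    rw [hsa]
    linarith
  have h6 : ∑ i, (((n:ℝ) - 2) * ℓ) * x i ^ 2
      ≤ ∑ i, (2 * (J i i - ℓ) - ∑ j, (J i j - ℓ)) * x i ^ 2 :=
    Finset.sum_le_sum fun i _ => mul_le_mul_of_nonneg_right (h5 i) (sq_nonneg _)
  rw [h4] at h3
  rw [h1]
  calc ((n:ℝ) - 2) * ℓ * ∑ i, x i ^ 2 = ∑ i, (((n:ℝ) - 2) * ℓ) * x i ^ 2 :=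
        Finset.mul_sum _ _ _
    _ ≤ ∑ i, (2 * (J i i - ℓ) - ∑ j, (J i j - ℓ)) * x i ^ 2 := h6
    _ ≤ ∑ i, ∑ j, (J i j - ℓ) * x i * x j := h3
    _ ≤ _ := le_add_of_nonneg_right h2

/-- The maximum absolute row sum norm of a matrix. -/
noncomputable def infNorm {n : ℕ} (A : Matrix (Fin n) (Fin n) ℝ) : ℝ :=
  ⨆ i, ∑ j, |A i j|

theorem inverse_norm_spectral_bound
    (n : ℕ) (hn : 3 ≤ n) (ℓ : ℝ) (hℓ : 0 < ℓ)
    (J : Matrix (Fin n) (Fin n) ℝ) (hsym : J.IsSymm)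
    (hdd : ∀ i, ∑ j ∈ Finset.univ.erase i, |J i j| ≤ |J i i|)
    (hent : ∀ i j, ℓ ≤ J i j) :
    IsUnit J ∧ infNorm J⁻¹ ≤ Real.sqrt n / (((n : ℝ) - 2) * ℓ) := by
  have hn0 : 0 < n := by omega
  haveI : Nonempty (Fin n) := Fin.pos_iff_nonempty.mp hn0
  have h3n : (3:ℝ) ≤ (n:ℝ) := by exact_mod_cast hn
  have hc : (0:ℝ) < ((n:ℝ) - 2) * ℓ := by nlinarith
  have quad := quadLB n hn ℓ hℓ J hsym hdd hent
  have hJs : ∀ i j, J i j = J j i := fun i j => hsym.apply j i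
  -- invertibility
  have hdet : J.det ≠ 0 := by
    intro h0
    obtain ⟨v, hv, hmv⟩ := Matrix.exists_mulVec_eq_zero_iff.mpr h0
    have hvec : ∀ i, ∑ j, J i j * v i * v j = v i * (J *ᵥ v) i := by
      intro i
      rw [Matrix.mulVec, dotProduct, Finset.mul_sum]
      exact Finset.sum_congr rfl fun j _ => by ring
    have hzero : ∑ i, ∑ j, J i j * v i * v j = 0 := by
      rw [Finset.sum_congr rfl fun i _ => hvec i, hmv]
      simp
    have hq := quad v
    rw [hzero] at hq
    have hS0 : 0 ≤ ∑ i, v i ^ 2 := Finset.sum_nonneg fun i _ => sq_nonneg _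
    have hSz : ∑ i, v i ^ 2 = 0 := by nlinarith
    have : ∀ i ∈ Finset.univ, v i ^ 2 = 0 :=
      (Finset.sum_eq_zero_iff_of_nonneg fun i _ => sq_nonneg (v i)).mp hSz
    exact hv (funext fun i => pow_eq_zero_iff two_ne_zero |>.mp (this i (Finset.mem_univ i)))
  have hUd : IsUnit J.det := isUnit_iff_ne_zero.mpr hdet
  have hU : IsUnit J := (Matrix.isUnit_iff_isUnit_det J).mpr hUd
  refine ⟨hU, ?_⟩
  have hinv : J⁻¹ * J = 1 := Matrix.nonsing_inv_mul J hUd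
  -- row bound
  have row : ∀ i, ∑ j, |J⁻¹ i j| ≤ Real.sqrt n / (((n:ℝ) - 2) * ℓ) := by
    intro i
    set x : Fin n → ℝ := fun j => J⁻¹ i j with hx
    have inner : ∀ k, ∑ j, J k j * x j = (1 : Matrix (Fin n) (Fin n) ℝ) i k := by
      intro k
      have e : ∑ j, J k j * x j = ∑ j, J⁻¹ i j * J j k :=
        Finset.sum_congr rfl fun j _ => by rw [hJs k j]; ring
      rw [e, ← hinv]
      simp [Matrix.mul_apply]
    have key : ∑ k, ∑ j, J k j * x k * x j = x i := by
      have e1 : ∀ k, ∑ j, J k j * x k * x j = x k * ∑ j, J k j * x j := by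
        intro k
        rw [Finset.mul_sum]
        exact Finset.sum_congr rfl fun j _ => by ring
      rw [Finset.sum_congr rfl fun k _ => e1 k]
      simp only [inner, Matrix.one_apply, mul_ite, mul_one, mul_zero]
      simp
    have hq := quad x
    rw [key] at hq
    set S := ∑ j, x j ^ 2 with hSdef
    have hS0 : 0 ≤ S := Finset.sum_nonneg fun j _ => sq_nonneg _
    have hxiS : x i ≤ Real.sqrt S := by
      have h1 : x i ^ 2 ≤ S := Finset.single_le_sum (fun j _ => sq_nonneg (x j)) (Finset.mem_univ i)
      calc x i ≤ |x i| := le_abs_self _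
        _ = Real.sqrt (x i ^ 2) := (Real.sqrt_sq_eq_abs _).symm
        _ ≤ Real.sqrt S := Real.sqrt_le_sqrt h1
    have hsq : Real.sqrt S ≤ 1 / (((n:ℝ) - 2) * ℓ) := by
      have hSS : Real.sqrt S * Real.sqrt S = S := Real.mul_self_sqrt hS0
      have hkey : ((n:ℝ) - 2) * ℓ * (Real.sqrt S * Real.sqrt S) ≤ Real.sqrt S := by
        rw [hSS]; linarith
      have hs0 : 0 ≤ Real.sqrt S := Real.sqrt_nonneg _
      rw [le_div_iff₀ hc]
      nlinarith
    have hcs : (∑ j, |x j|) ^ 2 ≤ (n:ℝ) * S := by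
      have := sq_sum_le_card_mul_sum_sq (s := (Finset.univ : Finset (Fin n)))
        (f := fun j => |x j|)
      simpa [sq_abs, Finset.card_univ] using this
    have h7 : ∑ j, |x j| ≤ Real.sqrt ((n:ℝ) * S) := by
      rw [Real.le_sqrt (Finset.sum_nonneg fun j _ => abs_nonneg _) (by positivity)]
      exact hcs
    calc ∑ j, |J⁻¹ i j| = ∑ j, |x j| := rfl
      _ ≤ Real.sqrt ((n:ℝ) * S) := h7
      _ = Real.sqrt n * Real.sqrt S := Real.sqrt_mul (by positivity) _
      _ ≤ Real.sqrt n * (1 / (((n:ℝ) - 2) * ℓ)) :=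
          mul_le_mul_of_nonneg_left hsq (Real.sqrt_nonneg _)
      _ = Real.sqrt n / (((n:ℝ) - 2) * ℓ) := by rw [mul_one_div]
  exact ciSup_le row
end

section
/- Let n ≥ 3, let ℓ > 0 and α ≥ (n−2)ℓ, and set S = αIₙ + ℓ𝟙ₙ𝟙ₙᵀ. Let P be a nonzero n×n real symmetric diagonally dominant matrix with nonnegative entries, and set Q = S⁻¹ P S⁻¹. Then Q_{ii} − Σ_{j≠i} Q_{ij} > 0 for every i = 1,…,n. -/
/-!
Since `J = 𝟙𝟙ᵀ` satisfies `J * J = n • J`, the inverse is `S⁻¹ = α⁻¹ • 1 - c • J` with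
`c = ℓ / (α (α + n ℓ))`. Hence `Q i k = u² P i k - u c (r i + r k) + c² W`, where `u = α⁻¹`, `r` are
the row sums (= column sums) of `P` and `W` is the sum of all its entries. Dominance of the rows
`a ≠ i` gives `r a ≥ 2 P a i`, hence `W ≥ P i i + 3 s` with `s = ∑_{j ≠ i} P i j`. The row excess of
`Q` is then a combination of `P i i`, `P i i - s` and `W - (P i i + 3 s)` with nonnegative
coefficients, the first and last strictly positive for `n ≥ 3`, and `P i i = 0` forces `s = 0`
while `W > 0`.
-/

open Matrix Finset

namespace Matrix

variable {l m n ι R : Type*}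

section Ones

variable [Fintype m] [NonAssocSemiring R]

lemma ones_mul_apply (M : Matrix m n R) (i : l) (k : n) :
    ((of fun _ _ => 1 : Matrix l m R) * M) i k = ∑ j, M j k := by
  simp [mul_apply]

lemma mul_ones_apply (M : Matrix l m R) (i : l) (k : n) :
    (M * (of fun _ _ => 1 : Matrix m n R)) i k = ∑ j, M i j := by
  simp [mul_apply]

lemma ones_mul_ones :
    (of fun _ _ => 1 : Matrix l m R) * (of fun _ _ => 1 : Matrix m n R) =
      (Fintype.card m : R) • of fun _ _ => 1 := by
  ext i k
  simp [ones_mul_apply]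

end Ones

variable [Fintype ι] [DecidableEq ι]

lemma inv_smul_one_add_smul_ones {K : Type*} [Field K] {α ℓ : K} (hα : α ≠ 0)
    (hαℓ : α + Fintype.card ι * ℓ ≠ 0) :
    (α • 1 + ℓ • of fun _ _ => 1 : Matrix ι ι K)⁻¹ =
      α⁻¹ • 1 - (ℓ / (α * (α + Fintype.card ι * ℓ))) • of fun _ _ => 1 := by
  refine inv_eq_right_inv ?_
  simp only [add_mul, mul_sub, smul_mul_smul_comm, one_mul, mul_one, ones_mul_ones, smul_smul]
  match_scalars
  · field_simp
  · have : α + ℓ * Fintype.card ι ≠ 0 := by rwa [mul_comm ℓ]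
    field_simp
    ring

lemma smul_one_sub_smul_ones_conj_apply [CommRing R] (u c : R) (M : Matrix ι ι R) (i k : ι) :
    ((u • 1 - c • of fun _ _ => 1) * M * (u • 1 - c • of fun _ _ => 1) : Matrix ι ι R) i k =
      u * u * M i k - u * c * ∑ j, M i j - u * c * ∑ j, M j k + c * c * ∑ a, ∑ b, M a b := by
  simp only [sub_mul, mul_sub, Matrix.smul_mul, Matrix.mul_smul, Matrix.mul_assoc, one_mul,
    mul_one, sub_apply, smul_apply, ones_mul_apply, mul_ones_apply, smul_eq_mul]
  ring

lemma sum_smul_one_sub_smul_ones_conj_apply [CommRing R] (u c : R) (M : Matrix ι ι R) (i : ι) :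
    ∑ k, ((u • 1 - c • of fun _ _ => 1) * M * (u • 1 - c • of fun _ _ => 1) : Matrix ι ι R) i k =
      (u - Fintype.card ι * c) * (u * ∑ j, M i j - c * ∑ a, ∑ b, M a b) := by
  simp only [smul_one_sub_smul_ones_conj_apply, sum_add_distrib, sum_sub_distrib, ← mul_sum,
    sum_const, card_univ, nsmul_eq_mul]
  rw [sum_comm (f := fun j k => M j k)]
  ring

end Matrix

section Dominance

variable {ι R : Type*} [Fintype ι] [CommRing R] [LinearOrder R] [IsStrictOrderedRing R]

lemma Matrix.sum_sum_pos_of_ne_zero {P : Matrix ι ι R} (hpos : ∀ i j, 0 ≤ P i j) (hP : P ≠ 0) :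
    0 < ∑ a, ∑ b, P a b := by
  obtain ⟨a, b, hab⟩ : ∃ a b, P a b ≠ 0 := by
    by_contra! h
    exact hP (ext h)
  exact sum_pos' (fun a _ => sum_nonneg fun b _ => hpos a b)
    ⟨a, mem_univ a, sum_pos' (fun b _ => hpos a b) ⟨b, mem_univ b, (hpos a b).lt_of_ne' hab⟩⟩

variable [DecidableEq ι]

lemma two_mul_le_sum_of_sum_erase_le {f : ι → R} (hf : ∀ j, 0 ≤ f j) {a j : ι} (hja : j ≠ a)
    (hdom : ∑ b ∈ univ.erase a, f b ≤ f a) : 2 * f j ≤ ∑ b, f b := by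
  have hj : f j ≤ ∑ b ∈ univ.erase a, f b :=
    single_le_sum (fun b _ => hf b) (mem_erase.2 ⟨hja, mem_univ j⟩)
  rw [← add_sum_erase _ _ (mem_univ a)]
  linarith

lemma Matrix.apply_add_three_mul_sum_erase_le_sum_sum {P : Matrix ι ι R} (hP : P.IsSymm)
    (hpos : ∀ i j, 0 ≤ P i j) (hdom : ∀ i, ∑ j ∈ univ.erase i, P i j ≤ P i i) (i : ι) :
    P i i + 3 * ∑ j ∈ univ.erase i, P i j ≤ ∑ a, ∑ b, P a b := by
  have hrow : P i i + ∑ j ∈ univ.erase i, P i j = ∑ b, P i b := add_sum_erase _ _ (mem_univ i)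
  have hrest : 2 * ∑ a ∈ univ.erase i, P i a ≤ ∑ a ∈ univ.erase i, ∑ b, P a b := by
    rw [mul_sum]
    refine sum_le_sum fun a ha => ?_
    rw [← hP.apply i a]
    exact two_mul_le_sum_of_sum_erase_le (hpos a) (ne_of_mem_erase ha).symm (hdom a)
  rw [← add_sum_erase _ _ (mem_univ i)]
  linarith

end Dominance

/-- For `S⁻¹ = u • 1 - c • J`, `p = P i i`, `s = ∑_{j ≠ i} P i j` and `W = ∑ P`, the expression
on the right is `Q i i - ∑_{j ≠ i} Q i j`, with `u - n c = (α + n ℓ)⁻¹`. -/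
lemma conj_row_excess_pos {n u c p s W : ℝ} (hn : 3 ≤ n) (hc : 0 < c) (hu : 0 < u - n * c)
    (hs : 0 ≤ s) (hsp : s ≤ p) (hW : p + 3 * s ≤ W) (hW0 : 0 < W) :
    0 < 2 * (u * u * p - 2 * (u * c * (p + s)) + c * c * W) -
      (u - n * c) * (u * (p + s) - c * W) := by
  obtain ⟨g, hg, rfl⟩ : ∃ g, 0 < g ∧ u = g + n * c := ⟨u - n * c, hu, by ring⟩
  have hdecomp :
      2 * ((g + n * c) * (g + n * c) * p - 2 * ((g + n * c) * c * (p + s)) + c * c * W) -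
          (g + n * c - n * c) * ((g + n * c) * (p + s) - c * W) =
        2 * (n - 2) * c * (g + (n - 2) * c) * p +
          (g ^ 2 + (n + 1) * c * g + (4 * n - 6) * c ^ 2) * (p - s) +
          c * (g + 2 * c) * (W - (p + 3 * s)) := by
    ring
  have hn2 : 0 < n - 2 := by linarith
  have hdiag : 0 ≤ (g ^ 2 + (n + 1) * c * g + (4 * n - 6) * c ^ 2) * (p - s) :=
    mul_nonneg (by nlinarith [mul_pos hc hg]) (by linarith)
  have hrest : 0 ≤ c * (g + 2 * c) * (W - (p + 3 * s)) := mul_nonneg (by positivity) (by linarith)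
  rw [hdecomp]
  obtain rfl | hp := (hs.trans hsp).eq_or_lt
  · obtain rfl : s = 0 := le_antisymm hsp hs
    simpa using mul_pos (mul_pos hc (by positivity : 0 < g + 2 * c)) hW0
  · have : 0 < 2 * (n - 2) * c * (g + (n - 2) * c) * p := by positivity
    linarith

theorem conjugated_matrix_row_dominance
    (n : ℕ) (hn : 3 ≤ n) (ℓ α : ℝ) (hℓ : 0 < ℓ) (hα : ((n : ℝ) - 2) * ℓ ≤ α)
    (S : Matrix (Fin n) (Fin n) ℝ)
    (hS : S = α • (1 : Matrix (Fin n) (Fin n) ℝ) +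
      ℓ • Matrix.of (fun _ _ => (1 : ℝ)))
    (P : Matrix (Fin n) (Fin n) ℝ) (hP0 : P ≠ 0) (hPsym : P.IsSymm)
    (hPpos : ∀ i j, 0 ≤ P i j)
    (hPdd : ∀ i, ∑ j ∈ Finset.univ.erase i, |P i j| ≤ |P i i|)
    (Q : Matrix (Fin n) (Fin n) ℝ) (hQ : Q = S⁻¹ * P * S⁻¹) :
    ∀ i, 0 < Q i i - ∑ j ∈ Finset.univ.erase i, Q i j := by
  have hn3 : (3 : ℝ) ≤ n := by exact_mod_cast hn
  have hα0 : 0 < α := by nlinarith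
  have hαn : 0 < α + n * ℓ := by positivity
  set c := ℓ / (α * (α + n * ℓ))
  have hSinv : S⁻¹ = α⁻¹ • 1 - c • of fun _ _ => 1 := by
    rw [hS, inv_smul_one_add_smul_ones hα0.ne' (by simpa using hαn.ne'), Fintype.card_fin]
  have hg : α⁻¹ - n * c = (α + n * ℓ)⁻¹ := by
    simp only [c]
    field_simp
    ring
  have hdom : ∀ i, ∑ j ∈ univ.erase i, P i j ≤ P i i := by
    simpa only [abs_of_nonneg (hPpos _ _)] using hPdd
  intro i
  have hcol : ∑ j, P j i = ∑ j, P i j := sum_congr rfl fun j _ => hPsym.apply i j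
  rw [sum_erase_eq_sub (mem_univ i), hQ, hSinv, sum_smul_one_sub_smul_ones_conj_apply,
    smul_one_sub_smul_ones_conj_apply, Fintype.card_fin, hcol, ← add_sum_erase _ _ (mem_univ i)]
  have hexcess := conj_row_excess_pos hn3 (by positivity) (hg ▸ inv_pos.2 hαn)
    (sum_nonneg fun j _ => hPpos i j) (hdom i)
    (P.apply_add_three_mul_sum_erase_le_sum_sum hPsym hPpos hdom i)
    (P.sum_sum_pos_of_ne_zero hPpos hP0)
  linear_combination hexcess
end

section
/- Let n ≥ 3, let ℓ > 0 and α ≥ (n−2)ℓ, and set S = αIₙ + ℓ𝟙ₙ𝟙ₙᵀ. Let P be a nonzero n×n real symmetric diagonally dominant matrix with nonnegative entries, set Q = S⁻¹ P S⁻¹ and ξ = min_{1≤i≤n} (Q_{ii} − Σ_{j≠i} Q_{ij}), and define g(t) = ‖S⁻¹ − t·S⁻¹PS⁻¹‖∞ for t ≥ 0. Then ξ > 0 and there exists ε > 0 such that g(t) = ‖S⁻¹‖∞ − ξt for all t ∈ [0, ε]; in particular g is right-differentiable at 0 with g'(0) = −ξ < 0. -/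
open Matrix

/-!
By Sherman–Morrison, `S⁻¹ = α⁻¹ • 1 - b • J` with `J` the all-ones matrix and
`b = ℓ / (α (α + n ℓ))`: a matrix with positive diagonal, negative off-diagonal entries and equal
absolute row sums `m`. A small perturbation `- t • Q`, `t ≥ 0`, keeps this sign pattern, so the
absolute row sum of row `i` becomes `m - t (Q i i - ∑_{j ≠ i} Q i j)`, and the largest of these is
`m - t ξ`. This is linear in `t` near `0`, which gives both `ε` and the one-sided derivative.

For `ξ > 0`, expanding `Q = S⁻¹ P S⁻¹` writes each row margin of `Q` as a quadratic form in `α⁻¹`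
and `b` whose coefficients are `P i i`, the `i`-th row sum of `P` and the total sum of `P`;
symmetry and diagonal dominance of `P` bound these against each other, and `n ≥ 3` makes the
resulting combination positive.
-/

open Finset Filter Topology

section AllOnes

variable {ι K : Type*} [Fintype ι] [Field K]

theorem allOnes_mul_allOnes :
    (of fun _ _ => 1 : Matrix ι ι K) * of (fun _ _ => 1) =
      (Fintype.card ι : K) • of fun _ _ => 1 := by
  ext i j
  simp [mul_apply]

variable [DecidableEq ι]

theorem inv_smul_one_add_smul_allOnes {α ℓ : K} (hα : α ≠ 0)
    (hβ : α + Fintype.card ι * ℓ ≠ 0) :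
    (α • 1 + ℓ • of fun _ _ => 1 : Matrix ι ι K)⁻¹ =
      α⁻¹ • 1 - (ℓ / (α * (α + Fintype.card ι * ℓ))) • of fun _ _ => 1 := by
  refine inv_eq_right_inv ?_
  simp only [add_mul, mul_sub, smul_mul_smul, one_mul, mul_one, allOnes_mul_allOnes, smul_smul]
  match_scalars
  · field_simp
  · grind

theorem smul_one_sub_smul_allOnes_mul_mul_apply (u b : K) (P : Matrix ι ι K) (i j : ι) :
    ((u • 1 - b • of fun _ _ => 1) * P * (u • 1 - b • of fun _ _ => 1) : Matrix ι ι K) i j =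
      u ^ 2 * P i j - u * b * (∑ k, P k j + ∑ k, P i k) + b ^ 2 * ∑ k, ∑ l, P k l := by
  set J : Matrix ι ι K := of fun _ _ => 1
  have hexpand : (u • 1 - b • J) * P * (u • 1 - b • J) =
      u ^ 2 • P - (u * b) • (J * P + P * J) + b ^ 2 • (J * P * J) := by
    simp only [sub_mul, mul_sub, Matrix.smul_mul, Matrix.mul_smul, one_mul, mul_one, smul_add]
    module
  rw [hexpand]
  simp only [smul_add, Matrix.add_apply, Matrix.sub_apply, Matrix.smul_apply, smul_eq_mul,
    mul_apply, of_apply, one_mul, mul_one, J]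
  rw [sum_comm]
  ring

end AllOnes

section RowMargin

variable {ι : Type*} [Fintype ι] [DecidableEq ι]

def rowMargin (A : Matrix ι ι ℝ) (i : ι) : ℝ :=
  A i i - ∑ j ∈ univ.erase i, A i j

theorem rowMargin_eq_two_mul_sub_sum (A : Matrix ι ι ℝ) (i : ι) :
    rowMargin A i = 2 * A i i - ∑ j, A i j := by
  rw [rowMargin, ← add_sum_erase _ _ (mem_univ i)]
  ring

theorem sum_abs_sub_smul_apply {M Q : Matrix ι ι ℝ} {t : ℝ} {i : ι} (ht : 0 ≤ t)
    (hdiag : 0 ≤ M i i) (hoff : ∀ j ≠ i, M i j ≤ 0) (hsmall : ∀ j, t * |Q i j| ≤ |M i j|) :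
    ∑ j, |(M - t • Q) i j| = ∑ j, |M i j| - t * rowMargin Q i := by
  have hdiag' : |M i i - t * Q i i| = |M i i| - t * Q i i := by
    have := hsmall i
    rw [abs_of_nonneg hdiag] at this ⊢
    exact abs_of_nonneg (by nlinarith [le_abs_self (Q i i)])
  have hoff' : ∀ j ∈ univ.erase i, |M i j - t * Q i j| = |M i j| + t * Q i j := by
    intro j hj
    have := hsmall j
    rw [abs_of_nonpos (hoff j (ne_of_mem_erase hj))] at this ⊢
    rw [abs_of_nonpos (by nlinarith [neg_abs_le (Q i j)])]
    ring
  calc ∑ j, |(M - t • Q) i j|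
      = |M i i - t * Q i i| + ∑ j ∈ univ.erase i, |M i j - t * Q i j| :=
        (add_sum_erase _ _ (mem_univ i)).symm
    _ = (|M i i| - t * Q i i) + ∑ j ∈ univ.erase i, (|M i j| + t * Q i j) := by
        rw [hdiag', sum_congr rfl hoff']
    _ = ∑ j, |M i j| - t * rowMargin Q i := by
        rw [sum_add_distrib, ← mul_sum, ← add_sum_erase _ _ (mem_univ i), rowMargin]
        ring

omit [DecidableEq ι] in
theorem eventually_forall_mul_abs_le {M : Matrix ι ι ℝ} (hM : ∀ i j, M i j ≠ 0)
    (Q : Matrix ι ι ℝ) : ∀ᶠ t in 𝓝 0, ∀ i j, t * |Q i j| ≤ |M i j| := by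
  refine eventually_all.2 fun i => eventually_all.2 fun j => ?_
  have hlt : ∀ᶠ t in 𝓝 (0 : ℝ), t * |Q i j| < |M i j| :=
    (continuous_id.mul continuous_const).continuousAt.eventually_lt continuousAt_const
      (by simpa using hM i j)
  exact hlt.mono fun _ => le_of_lt

theorem sum_abs_smul_one_sub_smul_allOnes_apply {u b : ℝ} (hb : 0 ≤ b) (hbu : b ≤ u) (i : ι) :
    ∑ j, |(u • 1 - b • of fun _ _ => 1 : Matrix ι ι ℝ) i j| = u + (Fintype.card ι - 2) * b := by
  have hoff : ∀ j ∈ univ.erase i, |(u • 1 - b • of fun _ _ => 1 : Matrix ι ι ℝ) i j| = b := by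
    intro j hj
    simp [one_apply, (ne_of_mem_erase hj).symm, hb]
  rw [← add_sum_erase _ _ (mem_univ i), sum_congr rfl hoff, sum_erase_eq_sub (mem_univ i)]
  simp only [smul_of, Matrix.sub_apply, Matrix.smul_apply, one_apply_eq, smul_eq_mul, mul_one,
    of_apply, Pi.smul_apply, abs_of_nonneg (sub_nonneg.2 hbu), sum_const, card_univ, nsmul_eq_mul]
  ring

end RowMargin

section Nonneg

variable {ι : Type*} [Fintype ι]

theorem sum_sum_pos_of_nonneg_of_ne_zero {P : Matrix ι ι ℝ} (hpos : ∀ i j, 0 ≤ P i j)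
    (hP0 : P ≠ 0) : 0 < ∑ k, ∑ l, P k l := by
  obtain ⟨i, j, hij⟩ : ∃ i j, P i j ≠ 0 := by
    by_contra! h
    exact hP0 (Matrix.ext h)
  exact sum_pos' (fun k _ => sum_nonneg fun l _ => hpos k l)
    ⟨i, mem_univ i, sum_pos' (fun l _ => hpos i l) ⟨j, mem_univ j, (hpos i j).lt_of_ne' hij⟩⟩

theorem two_mul_sum_sub_le_sum_sum [DecidableEq ι] {P : Matrix ι ι ℝ} (hsym : P.IsSymm)
    (hpos : ∀ i j, 0 ≤ P i j) (i : ι) : 2 * ∑ j, P i j - P i i ≤ ∑ k, ∑ l, P k l := by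
  have hcol : ∑ k, P k i = ∑ j, P i j := sum_congr rfl fun k _ => hsym.apply i k
  calc 2 * ∑ j, P i j - P i i = ∑ j, P i j + ∑ k ∈ univ.erase i, P k i := by
        rw [sum_erase_eq_sub (mem_univ i), hcol]
        ring
    _ ≤ ∑ j, P i j + ∑ k ∈ univ.erase i, ∑ l, P k l := by
        gcongr with k
        exact single_le_sum (fun l _ => hpos k l) (mem_univ i)
    _ = ∑ k, ∑ l, P k l := add_sum_erase _ (fun k => ∑ l, P k l) (mem_univ i)

end Nonneg

section Positivity

variable {ι : Type*} [Fintype ι] [DecidableEq ι]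

theorem rowMargin_smul_one_sub_smul_allOnes_mul_mul_pos {u b : ℝ} (hb : 0 < b)
    (hn : 2 ≤ (Fintype.card ι : ℝ)) (hbu : (Fintype.card ι - 2) * b < u)
    (hbu' : 3 * (Fintype.card ι - 2) * b < (2 * Fintype.card ι - 5) * u)
    {P : Matrix ι ι ℝ} (hsym : P.IsSymm) (hpos : ∀ i j, 0 ≤ P i j)
    (hdd : ∀ i, ∑ j ∈ univ.erase i, P i j ≤ P i i) (hP0 : P ≠ 0) (i : ι) :
    0 < rowMargin ((u • 1 - b • of fun _ _ => 1) * P * (u • 1 - b • of fun _ _ => 1)) i := by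
  set n : ℝ := (Fintype.card ι : ℝ)
  set d := P i i
  set r := ∑ j, P i j
  set T := ∑ k, ∑ l, P k l
  have hcol : ∑ k, P k i = r := sum_congr rfl fun k _ => hsym.apply i k
  have hmargin :
      rowMargin ((u • 1 - b • of fun _ _ => 1) * P * (u • 1 - b • of fun _ _ => 1)) i =
        2 * u ^ 2 * d - u * (u - (n - 4) * b) * r + b * (u - (n - 2) * b) * T := by
    simp only [rowMargin_eq_two_mul_sub_sum, smul_one_sub_smul_allOnes_mul_mul_apply,
      sum_add_distrib, sum_sub_distrib, ← mul_sum, sum_const, card_univ, nsmul_eq_mul, hcol]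
    rw [sum_comm (f := fun j k => P k j)]
    ring
  have hdr : d ≤ r := single_le_sum (fun j _ => hpos i j) (mem_univ i)
  have hrd : r ≤ 2 * d := by
    have := hdd i
    rw [sum_erase_eq_sub (mem_univ i)] at this
    linarith
  have hT : 2 * r - d ≤ T := two_mul_sum_sub_le_sum_sum hsym hpos i
  have hT0 : 0 < T := sum_sum_pos_of_nonneg_of_ne_zero hpos hP0
  have hK : 0 < b * (u - (n - 2) * b) := mul_pos hb (by linarith)
  have hC : 0 ≤ u * (u - (n - 2) * b) + 2 * (n - 2) * b ^ 2 := by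
    have hn2 : 0 ≤ n - 2 := by linarith
    have hu : 0 ≤ u := by nlinarith
    exact add_nonneg (mul_nonneg hu (by linarith)) (by positivity)
  have hA : 0 < b * ((2 * n - 5) * u - 3 * (n - 2) * b) := mul_pos hb (by linarith)
  -- all three summands are nonnegative, and the last is positive unless `d = 0`, forcing `r = 0`
  have hsplit : 2 * u ^ 2 * d - u * (u - (n - 4) * b) * r + b * (u - (n - 2) * b) * T =
      b * (u - (n - 2) * b) * (T - (2 * r - d)) +
        (u * (u - (n - 2) * b) + 2 * (n - 2) * b ^ 2) * (2 * d - r) +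
        b * ((2 * n - 5) * u - 3 * (n - 2) * b) * d := by
    ring
  rw [hmargin, hsplit]
  rcases (show 0 ≤ d from hpos i i).eq_or_lt with hd0 | hd0
  · have hr0 : r = 0 := by linarith
    rw [← hd0, hr0]
    simpa using mul_pos hK hT0
  · have := mul_nonneg hK.le (sub_nonneg.2 hT)
    have := mul_nonneg hC (sub_nonneg.2 hrd)
    have := mul_pos hA hd0
    linarith

theorem rowMargin_inv_mul_mul_inv_pos {α ℓ : ℝ} (hα : 0 < α) (hℓ : 0 < ℓ)
    (hn : 3 ≤ Fintype.card ι) {P : Matrix ι ι ℝ} (hsym : P.IsSymm) (hpos : ∀ i j, 0 ≤ P i j)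
    (hdd : ∀ i, ∑ j ∈ univ.erase i, P i j ≤ P i i) (hP0 : P ≠ 0) (i : ι) :
    0 < rowMargin ((α • 1 + ℓ • of fun _ _ => 1)⁻¹ * P * (α • 1 + ℓ • of fun _ _ => 1)⁻¹) i := by
  have hn3 : (3 : ℝ) ≤ Fintype.card ι := by exact_mod_cast hn
  set n : ℝ := (Fintype.card ι : ℝ)
  have hβ : 0 < α + n * ℓ := by positivity
  rw [inv_smul_one_add_smul_allOnes hα.ne' hβ.ne']
  refine rowMargin_smul_one_sub_smul_allOnes_mul_mul_pos (by positivity) (by linarith) ?_ ?_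
    hsym hpos hdd hP0 i
  · field_simp
    nlinarith
  · field_simp
    nlinarith [mul_pos hα (show (0 : ℝ) < 2 * n - 5 by linarith),
      mul_nonneg (mul_nonneg hℓ.le (show (0 : ℝ) ≤ n - 1 by linarith))
        (show (0 : ℝ) ≤ n - 3 by linarith)]

end Positivity

section InfNorm

variable {n : ℕ} [NeZero n]

theorem infNorm_eq_of_forall_sum_abs_eq {A : Matrix (Fin n) (Fin n) ℝ} {m : ℝ}
    (h : ∀ i, ∑ j, |A i j| = m) : infNorm A = m := by
  simp only [infNorm, h, ciSup_const]

theorem infNorm_eq_sub_mul_iInf {A : Matrix (Fin n) (Fin n) ℝ} {f : Fin n → ℝ} {m t : ℝ}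
    (ht : 0 ≤ t) (h : ∀ i, ∑ j, |A i j| = m - t * f i) : infNorm A = m - t * ⨅ i, f i := by
  rw [infNorm, iSup_congr h]
  exact (Antitone.map_ciInf_of_continuousAt (f := fun x => m - t * x) (by fun_prop)
    (fun x y hxy => by dsimp only; nlinarith) (Set.finite_range f).bddBelow).symm

theorem eventually_infNorm_sub_smul {M : Matrix (Fin n) (Fin n) ℝ} {m : ℝ}
    (hdiag : ∀ i, 0 < M i i) (hoff : ∀ i j, i ≠ j → M i j < 0) (hrow : ∀ i, ∑ j, |M i j| = m)
    (Q : Matrix (Fin n) (Fin n) ℝ) :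
    ∀ᶠ t in 𝓝[≥] 0, infNorm (M - t • Q) = infNorm M - (⨅ i, rowMargin Q i) * t := by
  have hM : ∀ i j, M i j ≠ 0 := fun i j => by
    rcases eq_or_ne i j with rfl | hij
    exacts [(hdiag i).ne', (hoff i j hij).ne]
  filter_upwards [self_mem_nhdsWithin, nhdsWithin_le_nhds (eventually_forall_mul_abs_le hM Q)]
    with t ht hsmall
  rw [infNorm_eq_of_forall_sum_abs_eq hrow, mul_comm]
  refine infNorm_eq_sub_mul_iInf ht fun i => ?_
  rw [sum_abs_sub_smul_apply ht (hdiag i).le (fun j hj => (hoff i j hj.symm).le) (hsmall i), hrow]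

theorem eventually_infNorm_inv_sub_smul {α ℓ : ℝ} (hα : 0 < α) (hℓ : 0 < ℓ)
    (Q : Matrix (Fin n) (Fin n) ℝ) :
    ∀ᶠ t in 𝓝[≥] 0, infNorm ((α • 1 + ℓ • of fun _ _ => 1)⁻¹ - t • Q) =
      infNorm (α • 1 + ℓ • of fun _ _ => 1 : Matrix (Fin n) (Fin n) ℝ)⁻¹ -
        (⨅ i, rowMargin Q i) * t := by
  have hn : (1 : ℝ) ≤ n := by exact_mod_cast NeZero.one_le
  have hβ : 0 < α + n * ℓ := by positivity
  have hb : 0 < ℓ / (α * (α + n * ℓ)) := by positivity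
  have hbu : ℓ / (α * (α + n * ℓ)) < α⁻¹ := by
    field_simp
    nlinarith
  rw [inv_smul_one_add_smul_allOnes hα.ne' (by simpa using hβ.ne'), Fintype.card_fin]
  refine eventually_infNorm_sub_smul (fun i => ?_) (fun i j hij => ?_)
    (sum_abs_smul_one_sub_smul_allOnes_apply hb.le hbu.le) Q
  · simp [hbu]
  · simp [one_apply, hij, hb]

end InfNorm

theorem linear_part_norm_decreasing
    (n : ℕ) (hn : 3 ≤ n) (ℓ α : ℝ) (hℓ : 0 < ℓ) (hα : ((n : ℝ) - 2) * ℓ ≤ α)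
    (S : Matrix (Fin n) (Fin n) ℝ)
    (hS : S = α • (1 : Matrix (Fin n) (Fin n) ℝ) +
      ℓ • Matrix.of (fun _ _ => (1 : ℝ)))
    (P : Matrix (Fin n) (Fin n) ℝ) (hP0 : P ≠ 0) (hPsym : P.IsSymm)
    (hPpos : ∀ i j, 0 ≤ P i j)
    (hPdd : ∀ i, ∑ j ∈ Finset.univ.erase i, |P i j| ≤ |P i i|)
    (Q : Matrix (Fin n) (Fin n) ℝ) (hQ : Q = S⁻¹ * P * S⁻¹)
    (ξ : ℝ) (hξ : ξ = ⨅ i, (Q i i - ∑ j ∈ Finset.univ.erase i, Q i j))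
    (g : ℝ → ℝ) (hg : ∀ t, g t = infNorm (S⁻¹ - t • Q)) :
    0 < ξ ∧
    (∃ ε > 0, ∀ t, 0 ≤ t → t ≤ ε → g t = infNorm S⁻¹ - ξ * t) ∧
    HasDerivWithinAt g (-ξ) (Set.Ici 0) 0 := by
  have : NeZero n := ⟨by omega⟩
  have hα0 : 0 < α := by
    have : (3 : ℝ) ≤ n := by exact_mod_cast hn
    nlinarith
  have hξ' : ξ = ⨅ i, rowMargin Q i := hξ
  have hξpos : 0 < ξ := by
    obtain ⟨i, hi⟩ := exists_eq_ciInf_of_finite (f := rowMargin Q)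
    rw [hξ', ← hi, hQ, hS]
    exact rowMargin_inv_mul_mul_inv_pos hα0 hℓ (by simpa using hn) hPsym hPpos
      (fun i => by simpa only [abs_of_nonneg (hPpos _ _)] using hPdd i) hP0 i
  have hev : ∀ᶠ t in 𝓝[≥] 0, g t = infNorm S⁻¹ - ξ * t := by
    filter_upwards [eventually_infNorm_inv_sub_smul hα0 hℓ Q] with t ht
    rw [hg, hS, ht, hξ', mul_comm]
  obtain ⟨ε, hε, hεsub⟩ := mem_nhdsGE_iff_exists_Icc_subset.1 hev
  refine ⟨hξpos, ⟨ε, hε, fun t ht0 htε => hεsub ⟨ht0, htε⟩⟩, ?_⟩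
  have hlin : HasDerivAt (fun t => infNorm S⁻¹ - ξ * t) (-ξ) 0 := by
    simpa using ((hasDerivAt_id (0 : ℝ)).const_mul ξ).const_sub (infNorm S⁻¹)
  exact hlin.hasDerivWithinAt.congr_of_eventuallyEq hev (hεsub ⟨le_rfl, hε.le⟩)
end

section
/- Let G be a connected simple graph on a finite nonempty vertex set V of size n that is not bipartite (i.e., G is not 2-colorable). Then the unsigned incidence matrix L of G over ℝ has rank n; equivalently, the signless Laplacian P = LLᵀ = D + A is positive definite, where D is the diagonal degree matrix and A the adjacency matrix of G. -/
/-!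
A vector `x` lies in the left kernel of the unsigned incidence matrix exactly when
`x u + x w = 0` along every edge `uw`. Then `x` vanishes on a connected component as soon
as it vanishes at one vertex, and otherwise its sign is a proper 2-colouring. So for a
connected non-bipartite graph the left kernel is trivial, which makes `L Lᵀ = D + A`
positive definite and gives `L` full row rank.
-/

open Matrix SimpleGraph

namespace SimpleGraph

variable {V R : Type*}

section Incidence

variable (G : SimpleGraph V) [Fintype V] [DecidableEq V] [DecidableRel G.Adj]

theorem incMatrix_mul_transpose_eq_diagonal_add_adjMatrix [Semiring R] :
    G.incMatrix R * (G.incMatrix R)ᵀ = diagonal (fun v => (G.degree v : R)) + G.adjMatrix R := by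
  ext a b
  by_cases h : a = b <;> simp [incMatrix_mul_transpose, h]

theorem vecMul_incMatrix_apply_of_adj [NonAssocSemiring R] (x : V → R) {u w : V}
    (h : G.Adj u w) : (x ᵥ* G.incMatrix R) s(u, w) = x u + x w := by
  have hterm : ∀ v, x v * G.incMatrix R v s(u, w) =
      if v ∈ ({u, w} : Finset V) then x v else 0 := by
    intro v
    simp [incMatrix_apply', mk'_mem_incidenceSet_iff, h]
  simp only [vecMul, dotProduct, hterm, Finset.sum_ite_mem, Finset.univ_inter,
    Finset.sum_pair (G.ne_of_adj h)]

end Incidence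

variable {G : SimpleGraph V}

theorem eq_zero_of_reachable_of_adj_add_eq_zero [AddGroup R] {x : V → R}
    (hx : ∀ u w, G.Adj u w → x u + x w = 0) {u v : V} (huv : G.Reachable u v) (hu : x u = 0) :
    x v = 0 := by
  obtain ⟨p⟩ := huv
  induction p with
  | nil => exact hu
  | cons h _ ih => exact ih (by rw [eq_neg_of_add_eq_zero_right (hx _ _ h), hu, neg_zero])

theorem colorable_two_of_adj_add_eq_zero [AddGroup R] [LinearOrder R] [AddLeftMono R]
    {x : V → R} (hx : ∀ u w, G.Adj u w → x u + x w = 0) (hx0 : ∀ v, x v ≠ 0) :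
    G.Colorable 2 := by
  refine ⟨Coloring.mk (fun v => if 0 < x v then (0 : Fin 2) else 1) fun {u w} huw heq => ?_⟩
  have hw : x w = -x u := eq_neg_of_add_eq_zero_right (hx u w huw)
  rcases (hx0 u).lt_or_gt with hu | hu
  · have : 0 < x w := by rw [hw]; exact neg_pos.mpr hu
    simp [hu.not_gt, this] at heq
  · have : ¬ 0 < x w := by rw [hw, not_lt]; exact neg_nonpos.mpr hu.le
    simp [hu, this] at heq

theorem vecMul_incMatrix_injective [Fintype V] [DecidableEq V] [DecidableRel G.Adj] [Ring R]
    [LinearOrder R] [AddLeftMono R] (hconn : G.Connected) (hnb : ¬ G.Colorable 2) :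
    Function.Injective fun x : V → R => x ᵥ* G.incMatrix R := by
  intro x y hxy
  have hz : (x - y) ᵥ* G.incMatrix R = 0 := by
    rw [sub_vecMul]; exact sub_eq_zero.mpr hxy
  have hedge : ∀ u w, G.Adj u w → (x - y) u + (x - y) w = 0 := fun u w h => by
    rw [← G.vecMul_incMatrix_apply_of_adj _ h, hz, Pi.zero_apply]
  by_contra hne
  obtain ⟨v₀, hv₀⟩ : ∃ v, (x - y) v ≠ 0 := Function.ne_iff.mp (sub_ne_zero.mpr hne)
  have hall : ∀ v, (x - y) v ≠ 0 := fun v hv =>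
    hv₀ (eq_zero_of_reachable_of_adj_add_eq_zero hedge (hconn.preconnected v v₀) hv)
  exact hnb (colorable_two_of_adj_add_eq_zero hedge hall)

end SimpleGraph

theorem incidence_rank_nonbipartite_general
    (V : Type) [Fintype V] [DecidableEq V] (n : ℕ) (hcard : Fintype.card V = n)
    (G : SimpleGraph V) [DecidableRel G.Adj]
    (hconn : G.Connected) (hnb : ¬ G.Colorable 2) :
    (G.incMatrix ℝ).rank = n ∧
    (Matrix.diagonal (fun v => (G.degree v : ℝ)) + G.adjMatrix ℝ).PosDef := by
  have hpd : (G.incMatrix ℝ * (G.incMatrix ℝ)ᵀ).PosDef := by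
    simpa only [conjTranspose_eq_transpose_of_trivial] using
      PosDef.mul_conjTranspose_self _ (vecMul_incMatrix_injective (R := ℝ) hconn hnb)
  refine ⟨?_, G.incMatrix_mul_transpose_eq_diagonal_add_adjMatrix (R := ℝ) ▸ hpd⟩
  rw [← rank_self_mul_transpose, rank_of_isUnit _ hpd.isUnit, hcard]

theorem incidence_rank_nonbipartite
    (V : Type) [Fintype V] [DecidableEq V] (n : ℕ) (hcard : Fintype.card V = n)
    (hne : Nonempty V) (G : SimpleGraph V) [DecidableRel G.Adj]
    (hconn : G.Connected) (hnb : ¬ G.Colorable 2) :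
    (G.incMatrix ℝ).rank = n ∧
    (Matrix.diagonal (fun v => (G.degree v : ℝ)) + G.adjMatrix ℝ).PosDef :=
  incidence_rank_nonbipartite_general V n hcard G hconn hnb
end

section
/- Let n ≥ 3, let ℓ > 0 and α ≥ (n−2)ℓ, and set S = αIₙ + ℓ𝟙ₙ𝟙ₙᵀ. Let P be an n×n signless Laplacian matrix and suppose N is an n×n matrix with (S + tP)⁻¹ → N as t → ∞. Then: (i) for all i ≠ j with P_{ij} = 1, the i-th and j-th columns of N are negatives of each other, i.e., N_{ki} = −N_{kj} for all k; and (ii) for every i with P_{ii} = 2 + Σ_{j≠i} P_{ij}, the i-th column of N is zero. -/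
/-!
Writing `M t = S + t • P`, the identity `M t⁻¹ * P = t⁻¹ • (1 - M t⁻¹ * S)` shows that
`M t⁻¹ * P → 0`, so `N * P = 0`: every row `z` of `N` satisfies `z ⬝ᵥ P *ᵥ z = 0`. For a
signless Laplacian this quadratic form is `∑ Δᵢ zᵢ² + ∑_{i<j} Pᵢⱼ (zᵢ + zⱼ)²`, a sum of
nonnegative terms, so `zᵢ + zⱼ = 0` along every edge and `zᵢ = 0` at every self-loop.
The same decomposition makes `P` positive semidefinite, hence `M t` positive definite and
invertible for `t ≥ 0`.
-/

open Matrix Finset Filter Topology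

namespace Matrix

variable {ι R : Type*} [Fintype ι] [DecidableEq ι]

theorem mul_eq_zero_of_tendsto_inv_add_smul {S P N : Matrix ι ι ℝ}
    (hunit : ∀ᶠ t : ℝ in atTop, IsUnit (S + t • P))
    (hN : Tendsto (fun t : ℝ => (S + t • P)⁻¹) atTop (𝓝 N)) : N * P = 0 := by
  have hzero : Tendsto (fun t : ℝ => (S + t • P)⁻¹ * P) atTop (𝓝 0) := by
    have h := tendsto_inv_atTop_zero.smul
      ((tendsto_const_nhds (x := (1 : Matrix ι ι ℝ))).sub (hN.mul_const S))
    rw [zero_smul] at h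
    refine h.congr' ?_
    filter_upwards [hunit, eventually_gt_atTop 0] with t ht htpos
    have hinv := (S + t • P).nonsing_inv_mul ((isUnit_iff_isUnit_det _).mp ht)
    rw [mul_add, mul_smul_comm] at hinv
    rw [← hinv, add_sub_cancel_left, smul_smul, inv_mul_cancel₀ htpos.ne', one_smul]
  exact tendsto_nhds_unique (hN.mul_const P) hzero

def diagExcess [Ring R] (P : Matrix ι ι R) (i : ι) : R := P i i - ∑ j ∈ univ.erase i, P i j

theorem IsSymm.two_mul_dotProduct_mulVec_self [CommRing R] {P : Matrix ι ι R} (hP : P.IsSymm)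
    (x : ι → R) :
    2 * (x ⬝ᵥ P *ᵥ x) = 2 * ∑ i, diagExcess P i * x i ^ 2 +
      ∑ i, ∑ j ∈ univ.erase i, P i j * (x i + x j) ^ 2 := by
  have hrow : ∀ i, 2 * (x i * (P *ᵥ x) i) = 2 * (diagExcess P i * x i ^ 2) +
      ∑ j ∈ univ.erase i, P i j * (x i + x j) ^ 2 -
      ∑ j ∈ univ.erase i, P i j * (x j ^ 2 - x i ^ 2) := by
    intro i
    have hsq : ∀ j, P i j * (x i + x j) ^ 2 =
        2 * (x i * (P i j * x j)) + 2 * (P i j * x i ^ 2) + P i j * (x j ^ 2 - x i ^ 2) :=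
      fun j => by ring
    rw [mulVec, dotProduct, ← add_sum_erase _ _ (mem_univ i), diagExcess,
      sum_congr rfl fun j _ => hsq j, sum_add_distrib, sum_add_distrib, sub_mul, sum_mul]
    simp only [← mul_sum]
    ring
  have hswap : ∑ i, ∑ j ∈ univ.erase i, P i j * (x j ^ 2 - x i ^ 2) = 0 := by
    have hfull : ∀ i, ∑ j ∈ univ.erase i, P i j * (x j ^ 2 - x i ^ 2) =
        ∑ j, P i j * (x j ^ 2 - x i ^ 2) := fun i => sum_erase _ (by simp)
    rw [sum_congr rfl fun i _ => hfull i]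
    simp only [mul_sub, sum_sub_distrib, sub_eq_zero]
    exact sum_comm.trans (sum_congr rfl fun i _ => sum_congr rfl fun j _ => by rw [hP.apply i j])
  rw [dotProduct, mul_sum, sum_congr rfl fun i _ => hrow i, sum_sub_distrib, hswap, sub_zero,
    sum_add_distrib, ← mul_sum]

section Ordered

variable [CommRing R] [LinearOrder R] [IsStrictOrderedRing R] {P : Matrix ι ι R}

theorem IsSymm.diagExcess_mul_sq_eq_zero_and_mul_add_sq_eq_zero (hP : P.IsSymm)
    (hoff : ∀ i j, i ≠ j → 0 ≤ P i j) (hΔ : ∀ i, 0 ≤ diagExcess P i) {x : ι → R}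
    (hx : x ⬝ᵥ P *ᵥ x = 0) :
    (∀ i, diagExcess P i * x i ^ 2 = 0) ∧ ∀ i j, i ≠ j → P i j * (x i + x j) ^ 2 = 0 := by
  have hloop : ∀ i ∈ univ, 0 ≤ diagExcess P i * x i ^ 2 :=
    fun i _ => mul_nonneg (hΔ i) (sq_nonneg _)
  have hedge : ∀ i, ∀ j ∈ univ.erase i, 0 ≤ P i j * (x i + x j) ^ 2 :=
    fun i j hj => mul_nonneg (hoff i j (ne_of_mem_erase hj).symm) (sq_nonneg _)
  have hloops := sum_nonneg hloop
  have hedges := sum_nonneg fun i (_ : i ∈ univ) => sum_nonneg (hedge i)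
  have hsum := hP.two_mul_dotProduct_mulVec_self x
  rw [hx, mul_zero] at hsum
  refine ⟨fun i => (sum_eq_zero_iff_of_nonneg hloop).mp (by linarith) i (mem_univ i),
    fun i j hij => (sum_eq_zero_iff_of_nonneg (hedge i)).mp ?_ j
      (mem_erase_of_ne_of_mem hij.symm (mem_univ j))⟩
  exact (sum_eq_zero_iff_of_nonneg fun i _ => sum_nonneg (hedge i)).mp (by linarith) i (mem_univ i)

theorem IsSymm.posSemidef_of_diagExcess_nonneg [StarRing R] [TrivialStar R] [StarOrderedRing R]
    (hP : P.IsSymm) (hoff : ∀ i j, i ≠ j → 0 ≤ P i j) (hΔ : ∀ i, 0 ≤ diagExcess P i) :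
    P.PosSemidef := by
  refine .of_dotProduct_mulVec_nonneg (isHermitian_iff_isSymm.mpr hP) fun x => ?_
  have hsum := hP.two_mul_dotProduct_mulVec_self x
  have hloops := sum_nonneg fun i (_ : i ∈ univ) => mul_nonneg (hΔ i) (sq_nonneg (x i))
  have hedges := sum_nonneg fun i (_ : i ∈ univ) => sum_nonneg fun j (hj : j ∈ univ.erase i) =>
    mul_nonneg (hoff i j (ne_of_mem_erase hj).symm) (sq_nonneg (x i + x j))
  rw [star_trivial]
  linarith

end Ordered

end Matrix

theorem limit_matrix_column_relations
    (n : ℕ) (hn : 3 ≤ n) (ℓ α : ℝ) (hℓ : 0 < ℓ) (hα : ((n : ℝ) - 2) * ℓ ≤ α)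
    (S : Matrix (Fin n) (Fin n) ℝ)
    (hS : S = α • (1 : Matrix (Fin n) (Fin n) ℝ) +
      ℓ • Matrix.of (fun _ _ => (1 : ℝ)))
    (P : Matrix (Fin n) (Fin n) ℝ) (hPsym : P.IsSymm)
    (hP01 : ∀ i j, i ≠ j → P i j = 0 ∨ P i j = 1)
    (hPΔ : ∀ i, P i i - ∑ j ∈ Finset.univ.erase i, P i j = 0 ∨
      P i i - ∑ j ∈ Finset.univ.erase i, P i j = 2)
    (N : Matrix (Fin n) (Fin n) ℝ)
    (hN : Filter.Tendsto (fun t : ℝ => (S + t • P)⁻¹) Filter.atTop (nhds N)) :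
    (∀ i j, i ≠ j → P i j = 1 → ∀ k, N k i = -N k j) ∧
    (∀ i, P i i = 2 + ∑ j ∈ Finset.univ.erase i, P i j → ∀ k, N k i = 0) := by
  have hn' : (3 : ℝ) ≤ n := by exact_mod_cast hn
  have hα0 : 0 < α := by nlinarith
  have hoff : ∀ i j, i ≠ j → 0 ≤ P i j := fun i j hij => by
    rcases hP01 i j hij with h | h <;> linarith
  have hΔ : ∀ i, 0 ≤ diagExcess P i := fun i => by
    rcases hPΔ i with h | h <;> (rw [diagExcess]; linarith)
  have hSpd : S.PosDef := by
    have hJ : (Matrix.of fun (_ _ : Fin n) => (1 : ℝ)).PosSemidef := by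
      simpa [vecMulVec] using posSemidef_vecMulVec_self_star (1 : Fin n → ℝ)
    exact hS ▸ (PosDef.one.smul hα0).add_posSemidef (hJ.smul hℓ.le)
  have hPpsd := hPsym.posSemidef_of_diagExcess_nonneg hoff hΔ
  have hNP : N * P = 0 := mul_eq_zero_of_tendsto_inv_add_smul
    ((eventually_ge_atTop 0).mono fun t ht => (hSpd.add_posSemidef (hPpsd.smul ht)).isUnit) hN
  have hrows (k) := hPsym.diagExcess_mul_sq_eq_zero_and_mul_add_sq_eq_zero hoff hΔ
    (x := N k) (by rw [dotProduct_mulVec, ← mul_apply_eq_vecMul, hNP]; exact zero_dotProduct _)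
  refine ⟨fun i j hij hPij k => ?_, fun i hloop k => ?_⟩
  · have := (hrows k).2 i j hij
    rw [hPij, one_mul, sq_eq_zero_iff] at this
    linarith
  · have := (hrows k).1 i
    rwa [show diagExcess P i = 2 by simp only [diagExcess]; linarith, mul_eq_zero,
      or_iff_right two_ne_zero, sq_eq_zero_iff] at this
end
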